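/- Under periodic tie-decay input with period T̃ > 0 and decay rate α > 0, the LMDS embedding of the tie-decay network converges to a limit cycle: for every t' ∈ [0, T̃), lim_{q→∞} ψ(B(qT̃ + t')) = ψ(X(t')), where X(t') = Σ_{ℓ=1}^{T} [e^{−α(t' − t_ℓ) mod T̃}/(1 − e^{−αT̃})] Ã_ℓ is the limit-cycle matrix. -/

import Mathlib

/-!
Counting whole periods backwards, `j = q - p`, an input `Ã_ℓ` at time `pT̃ + t_ℓ` enters
`B(qT̃ + t')` with weight `e^{-α(jT̃ + t' - t_ℓ)}` (or `0` when `j = 0` and `t_ℓ > t'`). So the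
coefficient of `Ã_ℓ` in `B(qT̃ + t')` is the `q`-th partial sum of a geometric series in
`e^{-αT̃}`, whose sum is the coefficient of `Ã_ℓ` in `X(t')`. Continuity of `ψ` transfers the
convergence `B(qT̃ + t') → X(t')` to the embedding.
-/

open Filter Topology

/-- The factor with which an interaction at time `τ` enters the tie-decay matrix at time `t`. -/
noncomputable def decayWeight (α t τ : ℝ) : ℝ := if τ ≤ t then Real.exp (-α * (t - τ)) else 0

section DecayWeight

variable {α t τ : ℝ}

lemma decayWeight_of_le (h : τ ≤ t) : decayWeight α t τ = Real.exp (-α * (t - τ)) := if_pos h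

lemma decayWeight_of_lt (h : t < τ) : decayWeight α t τ = 0 := if_neg h.not_ge

lemma decayWeight_add_add (c : ℝ) : decayWeight α (t + c) (τ + c) = decayWeight α t τ := by
  simp only [decayWeight, add_le_add_iff_right, add_sub_add_right_eq_sub]

lemma sum_range_decayWeight_reflect (T s : ℝ) (q : ℕ) :
    ∑ p ∈ Finset.range (q + 1), decayWeight α (q * T + t) (p * T + s) =
      ∑ j ∈ Finset.range (q + 1), decayWeight α (j * T + t) s := by
  rw [← Finset.sum_range_reflect]
  refine Finset.sum_congr rfl fun j hj => ?_
  have hjq : j ≤ q := Nat.lt_succ_iff.mp (Finset.mem_range.mp hj)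
  rw [show q + 1 - 1 - j = q - j by omega, Nat.cast_sub hjq,
    ← decayWeight_add_add (t := j * T + t) ((q - j) * T)]
  congr 1 <;> ring

lemma hasSum_decayWeight_periodic {T s : ℝ} (hα : 0 < α) (hT : 0 < T) (hs : s ≤ T + t) :
    HasSum (fun j : ℕ => decayWeight α (j * T + t) s)
      ((if s ≤ t then Real.exp (-α * (t - s)) else Real.exp (-α * (T + t - s))) /
        (1 - Real.exp (-α * T))) := by
  have hgeom : HasSum (fun j : ℕ => Real.exp (-α * T) ^ j) (1 - Real.exp (-α * T))⁻¹ :=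
    hasSum_geometric_of_lt_one (Real.exp_pos _).le (Real.exp_lt_one_iff.mpr (by nlinarith))
  have hexp (j : ℕ) (u : ℝ) :
      Real.exp (-α * (j * T + u)) = Real.exp (-α * u) * Real.exp (-α * T) ^ j := by
    rw [← Real.exp_nat_mul, ← Real.exp_add]
    ring_nf
  rw [div_eq_mul_inv]
  split_ifs with hst
  · have hterm (j : ℕ) :
        decayWeight α (j * T + t) s = Real.exp (-α * (t - s)) * Real.exp (-α * T) ^ j := by
      rw [decayWeight_of_le (by nlinarith [j.cast_nonneg (α := ℝ)]), ← hexp]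
      ring_nf
    simpa only [hterm] using hgeom.mul_left (Real.exp (-α * (t - s)))
  · have hterm (j : ℕ) :
        decayWeight α ((j + 1 : ℕ) * T + t) s =
          Real.exp (-α * (T + t - s)) * Real.exp (-α * T) ^ j := by
      rw [decayWeight_of_le (by push_cast; nlinarith [j.cast_nonneg (α := ℝ)]), ← hexp]
      push_cast
      ring_nf
    rw [← hasSum_nat_add_iff' 1, Finset.sum_range_one, Nat.cast_zero, zero_mul, zero_add,
      decayWeight_of_lt (not_le.mp hst), sub_zero]
    simpa only [hterm] using hgeom.mul_left (Real.exp (-α * (T + t - s)))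

end DecayWeight

section TieDecay

variable {ι E : Type*} [Fintype ι] [AddCommGroup E] [Module ℝ E] [TopologicalSpace E]
  {α T t : ℝ} {ts : ι → ℝ}

lemma tsum_decayWeight_smul_eq (A : ι → E) (hT : 0 < T) (hts : ∀ ℓ, 0 ≤ ts ℓ) (ht : t < T)
    (q : ℕ) :
    ∑' p : ℕ × ι, decayWeight α (q * T + t) (p.1 * T + ts p.2) • A p.2 =
      ∑ ℓ, (∑ j ∈ Finset.range (q + 1), decayWeight α (j * T + t) (ts ℓ)) • A ℓ := by
  have hsupp : ∀ p ∉ Finset.range (q + 1) ×ˢ Finset.univ,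
      decayWeight α (q * T + t) (p.1 * T + ts p.2) • A p.2 = 0 := by
    rintro ⟨p, ℓ⟩ hp
    have hqp : (q : ℝ) + 1 ≤ p := by exact_mod_cast (by simpa using hp : q < p)
    rw [decayWeight_of_lt (by nlinarith [hts ℓ]), zero_smul]
  rw [tsum_eq_sum hsupp, Finset.sum_product_right]
  refine Finset.sum_congr rfl fun ℓ _ => ?_
  rw [← sum_range_decayWeight_reflect, Finset.sum_smul]

lemma tendsto_tsum_decayWeight_smul [IsTopologicalAddGroup E] [ContinuousSMul ℝ E] (A : ι → E)
    (hα : 0 < α) (hT : 0 < T) (hts0 : ∀ ℓ, 0 ≤ ts ℓ) (htsT : ∀ ℓ, ts ℓ < T)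
    (ht0 : 0 ≤ t) (htT : t < T) :
    Tendsto (fun q : ℕ => ∑' p : ℕ × ι, decayWeight α (q * T + t) (p.1 * T + ts p.2) • A p.2)
      atTop (𝓝 (∑ ℓ, ((if ts ℓ ≤ t then Real.exp (-α * (t - ts ℓ))
        else Real.exp (-α * (T + t - ts ℓ))) / (1 - Real.exp (-α * T))) • A ℓ)) := by
  simp only [tsum_decayWeight_smul_eq A hT hts0 htT]
  refine tendsto_finsetSum _ fun ℓ _ => Tendsto.smul_const ?_ _
  exact ((hasSum_decayWeight_periodic hα hT (by linarith [htsT ℓ])).tendsto_sum_nat).comp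
    (tendsto_add_atTop_nat 1)

end TieDecay

/-- Under periodic input, the LMDS embedding of the tie-decay network converges to a
limit cycle: `ψ(B(qT̃ + t')) → ψ(X(t'))` as `q → ∞`. -/
theorem embedding_limit_cycle (N T M k : ℕ) (hT : 0 < T)
    (A : Fin T → Matrix (Fin N) (Fin N) ℝ)
    (Ttil α : ℝ) (hTtil : 0 < Ttil) (hα : 0 < α)
    (ts : Fin T → ℝ) (hmono : StrictMono ts)
    (h0 : 0 ≤ ts ⟨0, hT⟩) (hlt : ∀ ℓ, ts ℓ < Ttil)
    (B : ℝ → Matrix (Fin N) (Fin N) ℝ)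
    (hB : ∀ t, B t = ∑' p : ℕ × Fin T,
        if (p.1 : ℝ) * Ttil + ts p.2 ≤ t then
          Real.exp (-α * (t - ((p.1 : ℝ) * Ttil + ts p.2))) • A p.2
        else 0)
    (d : Matrix (Fin N) (Fin N) ℝ → Matrix (Fin N) (Fin N) ℝ → ℝ)
    (hd : Continuous fun p : Matrix (Fin N) (Fin N) ℝ × Matrix (Fin N) (Fin N) ℝ =>
        d p.1 p.2)
    (tl : Fin M → ℝ) (L' : Matrix (Fin k) (Fin M) ℝ) (δμ : Fin M → ℝ)
    (ψ : Matrix (Fin N) (Fin N) ℝ → Fin k → ℝ)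
    (hψ : ∀ C, ψ C = (-(1/2) : ℝ) • L'.mulVec ((fun m => d C (B (tl m)) ^ 2) - δμ))
    (Xc : ℝ → Matrix (Fin N) (Fin N) ℝ)
    (hX : ∀ t', Xc t' = ∑ ℓ : Fin T,
        ((if ts ℓ ≤ t' then Real.exp (-α * (t' - ts ℓ))
          else Real.exp (-α * (Ttil + t' - ts ℓ))) / (1 - Real.exp (-α * Ttil))) • A ℓ)
    (t' : ℝ) (ht'0 : 0 ≤ t') (ht'T : t' < Ttil) :
    Tendsto (fun q : ℕ => ψ (B ((q : ℝ) * Ttil + t'))) atTop (𝓝 (ψ (Xc t'))) := by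
  have hts0 (ℓ : Fin T) : 0 ≤ ts ℓ := h0.trans (hmono.monotone (Nat.zero_le _))
  have hBlim : Tendsto (fun q : ℕ => B ((q : ℝ) * Ttil + t')) atTop (𝓝 (Xc t')) := by
    simpa only [hB, hX, decayWeight, ite_smul, zero_smul] using
      tendsto_tsum_decayWeight_smul A hα hTtil hts0 hlt ht'0 ht'T
  have hψc : Continuous ψ := by
    rw [funext hψ]
    fun_prop
  exact (hψc.tendsto _).comp hBlim
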